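/- Let L₁, L₂ be two lines through a common point c in the plane, and let Z be the union of two segments [f₁,c] ⊆ L₁ and [c,f₀] ⊆ L₂, ordered from f₁ to f₀. Let A and B be convex sets disjoint from the open quadrant R¹ bounded by the rays from c through f₁ and f₀, such that A ∩ Z and B ∩ Z are nonempty intervals with A ∩ Z entirely preceding B ∩ Z in the order on Z. Suppose p ∈ closure(R²) (the quadrant adjacent to R¹ across L₁-side) and q ∈ R¹. Then the segment [p,q] crosses Z at a point of [f₁,c]; consequently, if B contains such a point p and B intersects R¹ at q, then B ∩ Z contains a point of [f₁,c], constraining the position of B ∩ Z on Z. -/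

import Mathlib

/-- The cross product (signed area form) of two vectors in the plane. -/
def crossP (u v : ℝ × ℝ) : ℝ := u.1 * v.2 - u.2 * v.1

/-- The open unit disk in the plane. -/
def unitDisk : Set (ℝ × ℝ) := {p | p.1 ^ 2 + p.2 ^ 2 < 1}

/-! The line through `c` and `f₁` separates `p` from `q`, so the intermediate value theorem
for the affine function `crossP (f₁ - c) (· - c)` gives a point `z ∈ [p, q]` on that line.
By convexity `z` lies in the closed disk and on the closed side of the line through `c` and `f₀`
containing `R¹` and `R²`. The second fact puts `z` on the ray from `c` through `f₁`; the first
stops it beyond `f₁`, since otherwise `f₁` would lie strictly between the interior point `c` and a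
point of the closed disk. -/

open Set

section Convex

variable {E : Type*} [AddCommGroup E] [Module ℝ E]

theorem ConvexOn.lt_of_mem_openSegment {s : Set E} {f : E → ℝ} (hf : ConvexOn ℝ s f)
    {x y z : E} {r : ℝ} (hxs : x ∈ s) (hys : y ∈ s) (hx : f x < r) (hy : f y ≤ r)
    (hz : z ∈ openSegment ℝ x y) : f z < r := by
  obtain ⟨a, b, ha, hb, hab, rfl⟩ := hz
  calc f (a • x + b • y) ≤ a * f x + b * f y := hf.2 hxs hys ha.le hb.le hab
    _ < a * r + b * r :=
      add_lt_add_of_lt_of_le (mul_lt_mul_of_pos_left hx ha) (mul_le_mul_of_nonneg_left hy hb.le)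
    _ = r := by rw [← add_mul, hab, one_mul]

variable [TopologicalSpace E] [IsTopologicalAddGroup E] [ContinuousSMul ℝ E]

theorem exists_mem_segment_eq_zero {f : E → ℝ} {p q : E} (hf : ContinuousOn f (segment ℝ p q))
    (hp : f p ≤ 0) (hq : 0 ≤ f q) : ∃ z ∈ segment ℝ p q, f z = 0 :=
  (convex_segment p q).isPreconnected.intermediate_value (left_mem_segment ℝ p q)
    (right_mem_segment ℝ p q) hf ⟨hp, hq⟩

end Convex

theorem convexOn_sq_add_sq : ConvexOn ℝ univ fun x : ℝ × ℝ => x.1 ^ 2 + x.2 ^ 2 := by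
  have hsq : ConvexOn ℝ univ fun x : ℝ => x ^ 2 := Even.convexOn_pow even_two
  exact (hsq.comp_linearMap (LinearMap.fst ℝ ℝ ℝ)).add (hsq.comp_linearMap (LinearMap.snd ℝ ℝ ℝ))

theorem isLinearMap_crossP (u : ℝ × ℝ) : IsLinearMap ℝ (crossP u) :=
  IsLinearMap.mk (fun v w => by simp only [crossP, Prod.fst_add, Prod.snd_add]; ring)
    (fun a v => by simp only [crossP, Prod.smul_fst, Prod.smul_snd, smul_eq_mul]; ring)

theorem crossP_sub_right (u v w : ℝ × ℝ) : crossP u (v - w) = crossP u v - crossP u w :=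
  (isLinearMap_crossP u).mk' _ |>.map_sub v w

theorem crossP_smul_right (u v : ℝ × ℝ) (a : ℝ) : crossP u (a • v) = a * crossP u v :=
  (isLinearMap_crossP u).map_smul a v

theorem crossP_anticomm (u v : ℝ × ℝ) : crossP u v = -crossP v u := by
  simp only [crossP]; ring

theorem continuous_crossP_sub (u c : ℝ × ℝ) : Continuous fun x => crossP u (x - c) := by
  unfold crossP; fun_prop

theorem convex_crossP_sub_nonpos (u c : ℝ × ℝ) : Convex ℝ {x | crossP u (x - c) ≤ 0} := by
  simpa only [crossP_sub_right, sub_nonpos] using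
    convex_halfSpace_le (isLinearMap_crossP u) (crossP u c)

theorem exists_eq_smul_of_crossP_eq_zero {u v : ℝ × ℝ} (hu : u ≠ 0) (h : crossP u v = 0) :
    ∃ s : ℝ, v = s • u := by
  have hN : 0 < u.1 ^ 2 + u.2 ^ 2 := by
    by_contra! hN
    refine hu (Prod.ext ?_ ?_) <;> refine pow_eq_zero_iff two_ne_zero |>.mp ?_ <;>
      nlinarith [sq_nonneg u.1, sq_nonneg u.2]
  unfold crossP at h
  refine ⟨(u.1 * v.1 + u.2 * v.2) / (u.1 ^ 2 + u.2 ^ 2), Prod.ext ?_ ?_⟩ <;>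
    simp only [Prod.smul_fst, Prod.smul_snd, smul_eq_mul] <;>
    rw [div_mul_eq_mul_div, eq_div_iff hN.ne']
  · linear_combination (-u.2) * h
  · linear_combination u.1 * h

theorem mem_segment_of_crossP_eq_zero {c f₀ f₁ z : ℝ × ℝ} (hf₁ : f₁.1 ^ 2 + f₁.2 ^ 2 = 1)
    (hc : c ∈ unitDisk) (hD : 0 < crossP (f₁ - c) (f₀ - c)) (hz : z.1 ^ 2 + z.2 ^ 2 ≤ 1)
    (hz₁ : crossP (f₁ - c) (z - c) = 0) (hz₀ : crossP (f₀ - c) (z - c) ≤ 0) :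
    z ∈ segment ℝ f₁ c := by
  have hc : c.1 ^ 2 + c.2 ^ 2 < 1 := hc
  have hf₁c : f₁ - c ≠ 0 := fun h => by
    rw [sub_eq_zero.mp h] at hf₁; linarith
  obtain ⟨s, hs⟩ := exists_eq_smul_of_crossP_eq_zero hf₁c hz₁
  have hs₀ : 0 ≤ s := by
    rw [hs, crossP_smul_right, crossP_anticomm] at hz₀
    nlinarith
  have hs₁ : s ≤ 1 := by
    by_contra! hs₁
    have hf₁_mem : f₁ ∈ openSegment ℝ c z := by
      rw [openSegment_eq_image']
      refine ⟨s⁻¹, ⟨by positivity, inv_lt_one_of_one_lt₀ hs₁⟩, ?_⟩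
      show c + s⁻¹ • (z - c) = f₁
      rw [hs, smul_smul, inv_mul_cancel₀ (by positivity), one_smul, add_sub_cancel]
    have := convexOn_sq_add_sq.lt_of_mem_openSegment (mem_univ c) (mem_univ z) hc hz hf₁_mem
    linarith
  rw [segment_symm, segment_eq_image']
  exact ⟨s, ⟨hs₀, hs₁⟩, show c + s • (f₁ - c) = z by rw [← hs, add_sub_cancel]⟩

theorem closure_unitDisk_inter_crossP_neg_subset {c u v : ℝ × ℝ} :
    closure (unitDisk ∩ {x | crossP u (x - c) < 0 ∧ crossP v (x - c) < 0}) ⊆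
      {x | x.1 ^ 2 + x.2 ^ 2 ≤ 1 ∧ crossP u (x - c) ≤ 0 ∧ crossP v (x - c) ≤ 0} := by
  refine closure_minimal (fun x hx => ⟨le_of_lt hx.1, hx.2.1.le, hx.2.2.le⟩) ?_
  have hsq : Continuous fun x : ℝ × ℝ => x.1 ^ 2 + x.2 ^ 2 := by fun_prop
  exact (isClosed_le hsq continuous_const).inter
    ((isClosed_le (continuous_crossP_sub u c) continuous_const).inter
      (isClosed_le (continuous_crossP_sub v c) continuous_const))

theorem segment_inter_segment_nonempty {c f₀ f₁ p q : ℝ × ℝ} (hf₁ : f₁.1 ^ 2 + f₁.2 ^ 2 = 1)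
    (hc : c ∈ unitDisk) (hD : 0 < crossP (f₁ - c) (f₀ - c))
    (hp : p.1 ^ 2 + p.2 ^ 2 ≤ 1) (hp₁ : crossP (f₁ - c) (p - c) ≤ 0)
    (hp₀ : crossP (f₀ - c) (p - c) ≤ 0) (hq : q ∈ unitDisk)
    (hq₁ : 0 < crossP (f₁ - c) (q - c)) (hq₀ : crossP (f₀ - c) (q - c) < 0) :
    (segment ℝ p q ∩ segment ℝ f₁ c).Nonempty := by
  obtain ⟨z, hzpq, hz₁⟩ := exists_mem_segment_eq_zero
    (continuous_crossP_sub (f₁ - c) c).continuousOn hp₁ hq₁.le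
  have hz : z.1 ^ 2 + z.2 ^ 2 ≤ 1 :=
    (convexOn_sq_add_sq.convex_le 1).segment_subset ⟨mem_univ p, hp⟩ ⟨mem_univ q, le_of_lt hq⟩
      hzpq |>.2
  have hz₀ : crossP (f₀ - c) (z - c) ≤ 0 :=
    (convex_crossP_sub_nonpos (f₀ - c) c).segment_subset hp₀ hq₀.le hzpq
  exact ⟨z, hzpq, mem_segment_of_crossP_eq_zero hf₁ hc hD hz hz₁ hz₀⟩

theorem segment_crosses_general (c f₀ f₁ : ℝ × ℝ)
    (hf₁ : f₁.1 ^ 2 + f₁.2 ^ 2 = 1)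
    (hc : c ∈ unitDisk) (hD : crossP (f₁ - c) (f₀ - c) > 0)
    (R1 R2 : Set (ℝ × ℝ))
    (hR1 : R1 = unitDisk ∩
      {x | crossP (f₁ - c) (x - c) > 0 ∧ crossP (f₀ - c) (x - c) < 0})
    (hR2 : R2 = unitDisk ∩
      {x | crossP (f₁ - c) (x - c) < 0 ∧ crossP (f₀ - c) (x - c) < 0}) :
    (∀ p ∈ closure R2, ∀ q ∈ R1,
      (segment ℝ p q ∩ segment ℝ f₁ c).Nonempty) ∧
    (∀ B : Set (ℝ × ℝ), Convex ℝ B →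
      ∀ p ∈ B ∩ closure R2, ∀ q ∈ B ∩ R1,
        (B ∩ segment ℝ f₁ c).Nonempty) := by
  have crosses : ∀ p ∈ closure R2, ∀ q ∈ R1, (segment ℝ p q ∩ segment ℝ f₁ c).Nonempty := by
    intro p hp q hq
    rw [hR2] at hp
    rw [hR1] at hq
    obtain ⟨hp, hp₁, hp₀⟩ := closure_unitDisk_inter_crossP_neg_subset hp
    obtain ⟨hq, hq₁, hq₀⟩ := hq
    exact segment_inter_segment_nonempty hf₁ hc hD hp hp₁ hp₀ hq hq₁ hq₀
  refine ⟨crosses, fun B hB p hp q hq => ?_⟩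
  obtain ⟨z, hzpq, hz⟩ := crosses p hp.2 q hq.2
  exact ⟨z, hB.segment_subset hp.1 hq.1 hzpq, hz⟩

/-- key claim in Lemma `sep`, Case 1: with `f₁, f₀` on the unit
circle and `c` inside the disk, let `R¹` be the open region of the disk between
the rays from `c` towards `f₁` and `f₀`, and `R²` the region adjacent to `R¹`
across the line through `c` and `f₁`.  Then the segment from any point
`p ∈ closure R²` to any point `q ∈ R¹` crosses the segment `[f₁, c]`;
consequently, a convex set `B` containing such a point `p` and meeting `R¹`
meets `[f₁, c]`. -/
theorem segment_crosses (c f₀ f₁ : ℝ × ℝ)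
    (hf₀ : f₀.1 ^ 2 + f₀.2 ^ 2 = 1) (hf₁ : f₁.1 ^ 2 + f₁.2 ^ 2 = 1)
    (hc : c ∈ unitDisk) (hD : crossP (f₁ - c) (f₀ - c) > 0)
    (R1 R2 : Set (ℝ × ℝ))
    (hR1 : R1 = unitDisk ∩
      {x | crossP (f₁ - c) (x - c) > 0 ∧ crossP (f₀ - c) (x - c) < 0})
    (hR2 : R2 = unitDisk ∩
      {x | crossP (f₁ - c) (x - c) < 0 ∧ crossP (f₀ - c) (x - c) < 0}) :
    (∀ p ∈ closure R2, ∀ q ∈ R1,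
      (segment ℝ p q ∩ segment ℝ f₁ c).Nonempty) ∧
    (∀ B : Set (ℝ × ℝ), Convex ℝ B →
      ∀ p ∈ B ∩ closure R2, ∀ q ∈ B ∩ R1,
        (B ∩ segment ℝ f₁ c).Nonempty) :=
  segment_crosses_general c f₀ f₁ hf₁ hc hD R1 R2 hR1 hR2
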